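/- arXiv:1001.2410 — 2 statements merged into one kernel-verified Lean document; each statement's English description precedes it below -/
import Mathlib

section
/- If A is an n×n Hermitian positive semidefinite matrix of rank r, then the limit as P → ∞ of log det(I + P·A) / log P equals r. -/
/-!
Diagonalizing `A`, `det (1 + P • A) = ∏ i, (1 + P * λ i)` over its eigenvalues `λ i ≥ 0`, so the
log-determinant is a sum of `log (1 + P * λ i)`. Divided by `log P`, a term tends to `1` when
`λ i > 0` (because `log (1 + P * λ) = log P + O(1)`) and vanishes when `λ i = 0`; the number of
nonzero eigenvalues of a Hermitian matrix is its rank.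
-/

open Matrix Filter Topology
open scoped ComplexOrder

namespace Real

theorem tendsto_log_one_add_mul_div_log {c : ℝ} (hc : 0 < c) :
    Tendsto (fun x => log (1 + x * c) / log x) atTop (𝓝 1) := by
  have hsplit : ∀ᶠ x in atTop, log (1 + x * c) / log x = 1 + log (x⁻¹ + c) / log x := by
    filter_upwards [eventually_gt_atTop 1] with x hx
    have hx0 : 0 < x := one_pos.trans hx
    rw [show 1 + x * c = x * (x⁻¹ + c) by field_simp, log_mul hx0.ne' (by positivity), add_div,
      div_self (log_pos hx).ne']
  have hlog : Tendsto (fun x => log (x⁻¹ + c)) atTop (𝓝 (log c)) := by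
    refine (continuousAt_log hc.ne').tendsto.comp ?_
    simpa using tendsto_inv_atTop_zero.add_const c
  have hrem : Tendsto (fun x => log (x⁻¹ + c) / log x) atTop (𝓝 0) :=
    hlog.div_atTop tendsto_log_atTop
  simpa using (hrem.const_add 1).congr' (hsplit.mono fun _ h => h.symm)

theorem tendsto_log_one_add_mul_div_log_of_nonneg {c : ℝ} (hc : 0 ≤ c) :
    Tendsto (fun x => log (1 + x * c) / log x) atTop (𝓝 (if c = 0 then 0 else 1)) := by
  rcases hc.eq_or_lt with rfl | hc
  · simp
  · simpa [hc.ne'] using tendsto_log_one_add_mul_div_log hc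

end Real

namespace Matrix

variable {𝕜 ι : Type*} [RCLike 𝕜] [Fintype ι] [DecidableEq ι] {A : Matrix ι ι 𝕜}

theorem IsHermitian.det_one_add_smul (hA : A.IsHermitian) (t : 𝕜) :
    (1 + t • A).det = ∏ i, (1 + t * hA.eigenvalues i) := by
  conv_lhs => rw [hA.spectral_theorem,
    ← map_one (Unitary.conjStarAlgAut 𝕜 _ hA.eigenvectorUnitary), ← map_smul, ← map_add]
  rw [Unitary.conjStarAlgAut_apply, det_mul_right_comm,
    Unitary.mul_star_self_of_mem hA.eigenvectorUnitary.2, one_mul,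
    ← diagonal_one, ← diagonal_smul, diagonal_add, det_diagonal]
  rfl

theorem PosSemidef.log_norm_det_one_add_smul (hA : A.PosSemidef) {t : ℝ} (ht : 0 ≤ t) :
    Real.log ‖(1 + (t : 𝕜) • A).det‖ = ∑ i, Real.log (1 + t * hA.1.eigenvalues i) := by
  have hpos : ∀ i, 0 < 1 + t * hA.1.eigenvalues i := fun i => by
    have := hA.eigenvalues_nonneg i
    positivity
  have hnorm : ∀ i, ‖1 + (t : 𝕜) * hA.1.eigenvalues i‖ = 1 + t * hA.1.eigenvalues i := fun i => by
    rw [← abs_of_pos (hpos i), ← RCLike.norm_ofReal (K := 𝕜)]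
    push_cast
    rfl
  rw [hA.1.det_one_add_smul, norm_prod, Finset.prod_congr rfl fun i _ => hnorm i]
  exact Real.log_prod fun i _ => (hpos i).ne'

end Matrix

theorem logdet_dof_limit (n r : ℕ) (A : Matrix (Fin n) (Fin n) ℂ)
    (hA : A.PosSemidef) (hr : A.rank = r) :
    Tendsto (fun P : ℝ =>
        Real.log ‖(1 + (P : ℂ) • A).det‖ / Real.log P)
      atTop (nhds (r : ℝ)) := by
  have hsum : (fun P : ℝ => Real.log ‖(1 + (P : ℂ) • A).det‖ / Real.log P)
      =ᶠ[atTop] fun P => ∑ i, Real.log (1 + P * hA.1.eigenvalues i) / Real.log P := by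
    filter_upwards [eventually_ge_atTop 0] with P hP
    rw [← RCLike.ofReal_eq_complex_ofReal, hA.log_norm_det_one_add_smul hP, Finset.sum_div]
  have hrank : (r : ℝ) = ∑ i, if hA.1.eigenvalues i = 0 then 0 else 1 := by
    rw [← hr, hA.1.rank_eq_card_non_zero_eigs, Fintype.card_subtype]
    simp [Finset.sum_ite]
  rw [hrank]
  exact (tendsto_finsetSum _ fun i _ =>
    Real.tendsto_log_one_add_mul_div_log_of_nonneg (hA.eigenvalues_nonneg i)).congr' hsum.symm
end

section
/- For row vectors g₁, g₂ ∈ ℂ^{1×M}: (for every Hermitian positive semidefinite M×M matrix S, g₁ S g₁^H = g₂ S g₂^H) if and only if there exists a unit-modulus complex scalar c with g₂ = c·g₁. -/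
open Matrix
open scoped ComplexOrder

/-!
Testing the hypothesis on the rank-one projections `S = v vᴴ` turns it into
`|g₁ ⬝ᵥ v| = |g₂ ⬝ᵥ v|` for every `v`. Hence the linear forms `g₁ ⬝ᵥ ·` and `g₂ ⬝ᵥ ·` have the
same kernel, so `g₂ = c • g₁`, and testing at `v = star g₁` gives `|c| = 1`. Conversely,
replacing `g` by `c • g` multiplies every form `g S gᴴ` by `c * conj c = 1`.
-/

open LinearMap in
theorem LinearMap.exists_eq_smul_of_ker_le {K E : Type*} [Field K] [AddCommGroup E] [Module K E]
    {f g : E →ₗ[K] K} (h : ker f ≤ ker g) : ∃ c : K, g = c • f := by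
  have hg := mem_span_of_iInf_ker_le_ker (L := fun _ : Unit ↦ f) (by simpa using h)
  rw [Set.range_const, Submodule.mem_span_singleton] at hg
  obtain ⟨c, hc⟩ := hg
  exact ⟨c, hc.symm⟩

namespace Matrix

variable {n K : Type*} [Fintype n]

theorem exists_eq_smul_of_forall_dotProduct_eq_zero [Field K] {g₁ g₂ : n → K}
    (h : ∀ v, g₁ ⬝ᵥ v = 0 → g₂ ⬝ᵥ v = 0) : ∃ c : K, g₂ = c • g₁ := by
  classical
  obtain ⟨c, hc⟩ := LinearMap.exists_eq_smul_of_ker_le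
    (f := dotProductEquiv K n g₁) (g := dotProductEquiv K n g₂) fun v ↦ h v
  exact ⟨c, (dotProductEquiv K n).injective (by rw [hc, map_smul])⟩

theorem dotProduct_vecMulVec_mulVec_star [CommRing K] [StarRing K] (g v : n → K) :
    g ⬝ᵥ vecMulVec v (star v) *ᵥ star g = (g ⬝ᵥ v) * star (g ⬝ᵥ v) := by
  rw [vecMulVec_mulVec, star_dotProduct_star, op_smul_eq_smul, dotProduct_smul,
    smul_eq_mul, mul_comm]

theorem smul_dotProduct_mulVec_star_smul [CommRing K] [StarRing K] (c : K) (g : n → K)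
    (S : Matrix n n K) :
    c • g ⬝ᵥ S *ᵥ star (c • g) = c * star c * (g ⬝ᵥ S *ᵥ star g) := by
  rw [star_smul, mulVec_smul, smul_dotProduct, dotProduct_smul, smul_eq_mul, smul_eq_mul]
  ring

variable {𝕜 : Type*} [RCLike 𝕜]

theorem exists_norm_eq_one_smul_eq_of_forall_norm_dotProduct_eq {g₁ g₂ : n → 𝕜}
    (h : ∀ v, ‖g₁ ⬝ᵥ v‖ = ‖g₂ ⬝ᵥ v‖) : ∃ c : 𝕜, ‖c‖ = 1 ∧ g₂ = c • g₁ := by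
  obtain ⟨c, rfl⟩ := exists_eq_smul_of_forall_dotProduct_eq_zero (g₂ := g₂) fun v hv ↦ by
    rw [← norm_eq_zero, ← h, hv, norm_zero]
  by_cases hg : g₁ = 0
  · exact ⟨1, by simp, by simp [hg]⟩
  · refine ⟨c, ?_, rfl⟩
    have hne : ‖g₁ ⬝ᵥ star g₁‖ ≠ 0 := by simpa using hg
    have hc := h (star g₁)
    rw [smul_dotProduct, smul_eq_mul, norm_mul] at hc
    exact (mul_eq_right₀ hne).mp hc.symm

theorem norm_dotProduct_eq_of_forall_posSemidef {g₁ g₂ : n → 𝕜}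
    (h : ∀ S : Matrix n n 𝕜, S.PosSemidef → g₁ ⬝ᵥ S *ᵥ star g₁ = g₂ ⬝ᵥ S *ᵥ star g₂) (v : n → 𝕜) :
    ‖g₁ ⬝ᵥ v‖ = ‖g₂ ⬝ᵥ v‖ := by
  have hsq := h _ (posSemidef_vecMulVec_self_star v)
  rw [dotProduct_vecMulVec_mulVec_star, dotProduct_vecMulVec_mulVec_star, RCLike.star_def,
    RCLike.mul_conj, RCLike.mul_conj] at hsq
  exact (pow_left_inj₀ (norm_nonneg _) (norm_nonneg _) two_ne_zero).mp (by exact_mod_cast hsq)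

end Matrix

theorem quadratic_forms_equal_iff_unimodular_multiple
    (M : ℕ) (g₁ g₂ : Fin M → ℂ) :
    (∀ S : Matrix (Fin M) (Fin M) ℂ, S.PosSemidef →
        g₁ ⬝ᵥ S.mulVec (star g₁) = g₂ ⬝ᵥ S.mulVec (star g₂))
      ↔ ∃ c : ℂ, ‖c‖ = 1 ∧ g₂ = c • g₁ := by
  constructor
  · exact fun h ↦ exists_norm_eq_one_smul_eq_of_forall_norm_dotProduct_eq
      (norm_dotProduct_eq_of_forall_posSemidef h)
  · rintro ⟨c, hc, rfl⟩ S -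
    rw [smul_dotProduct_mulVec_star_smul, RCLike.star_def, RCLike.mul_conj, hc,
      RCLike.ofReal_one, one_pow, one_mul]
end
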